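/- arXiv:2406.08936 — 2 statements merged into one kernel-verified Lean document; each statement's English description precedes it below -/
import Mathlib

section
/- Let g be an increasing, bounded, measurable allocation rule on [θ̲, θ̄] and let v̄ be differentiable. If the indirect utility satisfies U(θ) = U(θ') + ∫_{θ'}^{θ} (φ(g(x)) − v̄'(x)) dx for all θ, θ', then the mechanism with transfer t(θ) = θ·φ(g(θ)) − v̄(θ) − U(θ) is incentive compatible: for all θ, θ' in [θ̲, θ̄], θ·φ(g(θ)) − t(θ) ≥ θ·φ(g(θ')) − t(θ'). -/
/-- If the indirect utility satisfies the envelope integral condition,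
then the mechanism with transfer t(θ) = θ·φ(g(θ)) − v̄(θ) − U(θ) is incentive compatible. -/
theorem stmt_0 (a b : ℝ) (hab : a ≤ b)
    (φ g v U t : ℝ → ℝ)
    (hφ : Monotone φ)
    (hg : MonotoneOn g (Set.Icc a b))
    (hgbdd : ∃ M : ℝ, ∀ x ∈ Set.Icc a b, |g x| ≤ M)
    (hgmeas : Measurable g)
    (hv : Differentiable ℝ v)
    (hint : ∀ θ' θ : ℝ, IntervalIntegrable (fun x => φ (g x) - deriv v x)
      MeasureTheory.volume θ' θ)
    (hU : ∀ θ ∈ Set.Icc a b, ∀ θ' ∈ Set.Icc a b,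
      U θ = U θ' + ∫ x in θ'..θ, (φ (g x) - deriv v x))
    (ht : ∀ θ, t θ = θ * φ (g θ) - v θ - U θ) :
    ∀ θ ∈ Set.Icc a b, ∀ θ' ∈ Set.Icc a b,
      θ * φ (g θ) - t θ ≥ θ * φ (g θ') - t θ' := by
  intro θ hθ θ' hθ'
  have hmono : MonotoneOn (fun x => φ (g x)) (Set.Icc a b) :=
    fun x hx y hy hxy => hφ (hg hx hy hxy)
  have hsub : Set.uIcc θ' θ ⊆ Set.Icc a b := Set.uIcc_subset_Icc hθ' hθ
  have h1 : IntervalIntegrable (fun x => φ (g x)) MeasureTheory.volume θ' θ :=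
    (hmono.mono hsub).intervalIntegrable
  have hderiv_eq : (fun x => φ (g x) - (φ (g x) - deriv v x)) = deriv v := by
    funext x; ring
  have h2 : IntervalIntegrable (deriv v) MeasureTheory.volume θ' θ := by
    rw [← hderiv_eq]; exact h1.sub (hint θ' θ)
  have hFTC : (∫ x in θ'..θ, deriv v x) = v θ - v θ' :=
    intervalIntegral.integral_deriv_eq_sub (fun x _ => hv x) h2
  have hsplit : (∫ x in θ'..θ, (φ (g x) - deriv v x))
      = (∫ x in θ'..θ, φ (g x)) - ∫ x in θ'..θ, deriv v x :=
    intervalIntegral.integral_sub h1 h2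
  have key : (θ - θ') * φ (g θ') ≤ ∫ x in θ'..θ, φ (g x) := by
    rcases le_total θ' θ with h | h
    · have hconst : (∫ x in θ'..θ, φ (g θ')) = (θ - θ') * φ (g θ') := by
        simp [mul_comm]
      rw [← hconst]
      apply intervalIntegral.integral_mono_on h intervalIntegrable_const h1
      intro x hx
      exact hφ (hg hθ' (hsub (Set.mem_uIcc_of_le hx.1 hx.2)) hx.1)
    · have hflip : (∫ x in θ'..θ, φ (g x)) = -∫ x in θ..θ', φ (g x) := by
        rw [intervalIntegral.integral_symm]
      have hconst : (∫ x in θ..θ', φ (g θ')) = (θ' - θ) * φ (g θ') := by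
        simp [mul_comm]
      have hle : (∫ x in θ..θ', φ (g x)) ≤ (θ' - θ) * φ (g θ') := by
        rw [← hconst]
        apply intervalIntegral.integral_mono_on h h1.symm intervalIntegrable_const
        intro x hx
        exact hφ (hg (hsub (Set.mem_uIcc_of_ge hx.1 hx.2)) hθ' hx.2)
      rw [hflip]; linarith
  have hUeq := hU θ hθ θ' hθ'
  rw [ht θ, ht θ']
  rw [hsplit, hFTC] at hUeq
  linarith
end

section
/- Consider a stochastic mechanism assigning to each type θ a probability distribution μ(θ) over public-good levels, and define the deterministic allocation g(θ) by φ(g(θ)) = E_{μ(θ)}[φ(·)] (possible since φ is continuous, nondecreasing, unbounded with φ(0)=0). If the stochastic mechanism is incentive compatible with utility θ·E_{μ(θ')}[φ] − t(θ'), then the deterministic mechanism (g, t) is incentive compatible and yields every type the same utility. Moreover, if the designer's objective is concave in the public-good level, its value under (g, t) is weakly higher than under the stochastic mechanism. -/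
open MeasureTheory

/-- Replacing a stochastic mechanism μ by the deterministic
allocation g with φ(g(θ)) = E_{μ(θ)}[φ] preserves incentive compatibility and
every type's utility, and (for the concave objective σ(g) = A·φ(g) − g with
A ≥ 0) weakly raises the designer's objective. -/
theorem stmt_11 (a b : ℝ) (φ : ℝ → ℝ) (hφc : Continuous φ)
    (hφm : StrictMono φ) (hφ0 : φ 0 = 0)
    (μ : ℝ → Measure ℝ) (hprob : ∀ θ, IsProbabilityMeasure (μ θ))
    (hφint : ∀ θ, Integrable φ (μ θ)) (hidint : ∀ θ, Integrable id (μ θ))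
    (hφconc : ConcaveOn ℝ Set.univ φ)
    (g t : ℝ → ℝ)
    (hg : ∀ θ, φ (g θ) = ∫ x, φ x ∂(μ θ))
    (hIC : ∀ θ ∈ Set.Icc a b, ∀ θ' ∈ Set.Icc a b,
      θ * (∫ x, φ x ∂(μ θ)) - t θ ≥ θ * (∫ x, φ x ∂(μ θ')) - t θ') :
    (∀ θ ∈ Set.Icc a b, ∀ θ' ∈ Set.Icc a b,
      θ * φ (g θ) - t θ ≥ θ * φ (g θ') - t θ') ∧
    (∀ θ ∈ Set.Icc a b, θ * φ (g θ) - t θ = θ * (∫ x, φ x ∂(μ θ)) - t θ) ∧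
    (∀ A : ℝ, 0 ≤ A → ∀ θ ∈ Set.Icc a b,
      A * φ (g θ) - g θ ≥ ∫ x, (A * φ x - x) ∂(μ θ)) := by
  refine ⟨fun θ hθ θ' hθ' => by rw [hg, hg]; exact hIC θ hθ θ' hθ',
    fun θ hθ => by rw [hg], fun A hA θ hθ => ?_⟩
  haveI := hprob θ
  have jensen : (∫ x, φ (id x) ∂(μ θ)) ≤ φ (∫ x, id x ∂(μ θ)) :=
    hφconc.le_map_integral hφc.continuousOn isClosed_univ
      (Filter.Eventually.of_forall fun _ => Set.mem_univ _) (hidint θ)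
      (hφint θ)
  have hge : g θ ≤ ∫ x, x ∂(μ θ) := by
    have : φ (g θ) ≤ φ (∫ x, x ∂(μ θ)) := by
      rw [hg]; simpa [id] using jensen
    exact hφm.le_iff_le.mp this
  have : ∫ x, (A * φ x - x) ∂(μ θ) = A * (∫ x, φ x ∂(μ θ)) - ∫ x, x ∂(μ θ) := by
    have hi : Integrable (fun x : ℝ => x) (μ θ) := hidint θ
    rw [integral_sub ((hφint θ).const_mul A) hi, MeasureTheory.integral_const_mul]
  rw [this, ← hg]
  have := mul_le_mul_of_nonneg_left (le_refl (φ (g θ))) hA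
  linarith
end
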